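/- arXiv:1803.04914 — 2 statements merged into one kernel-verified Lean document; each statement's English description precedes it below -/
import Mathlib

section
/- Define the Bell polynomial B_n(x) = ∑_{j=0}^{n} S(n,j) x^j, where S(n,j) are Stirling numbers of the second kind. Then for any λ and N ≥ n, ∑_{k=0}^{N} B_n(kλ) = ∑_{m=0}^{n} C(N+1, m+1) m! T(n,m), where T(n,m) = ∑_{r=m}^{n} S(n,r) S(r,m) λ^r. -/
open Finset

/-- The Stirling number of the second kind, defined by
`S(n,m) = (1/m!) ∑_{k=0}^{m} C(m,k) (-1)^{m-k} k^n`. -/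
noncomputable def stirling2 (n m : ℕ) : ℝ :=
  ((m.factorial : ℝ))⁻¹ * ∑ k ∈ range (m + 1), (m.choose k : ℝ) * (-1) ^ (m - k) * (k : ℝ) ^ n

/-- The Bell (Touchard) polynomial `B_n(x) = ∑_{j=0}^{n} S(n,j) x^j`. -/
noncomputable def bellPoly (n : ℕ) (x : ℝ) : ℝ := ∑ j ∈ range (n + 1), stirling2 n j * x ^ j

/-! `m! S(r, m)` is the `m`-th forward difference of `x ↦ x ^ r` at `0`, so Newton's
forward-difference formula gives `k ^ r = ∑ₘ C(k, m) m! S(r, m)`. Summing over `k ≤ N` with the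
hockey-stick identity `∑_{k ≤ N} C(k, m) = C(N + 1, m + 1)` evaluates the power sums, and
substituting into `B_n(kλ) = ∑ᵣ S(n, r) λ^r k^r` and exchanging the sums over `r` and `m` gives
the claim, the inner sum starting at `r = m` because `S(r, m) = 0` for `r < m`. -/

lemma factorial_mul_stirling2 (r m : ℕ) :
    (m.factorial : ℝ) * stirling2 r m = (fwdDiff 1)^[m] (fun x : ℝ ↦ x ^ r) 0 := by
  rw [stirling2, mul_inv_cancel_left₀ (by positivity), fwdDiff_iter_eq_sum_shift]
  refine sum_congr rfl fun k _ ↦ ?_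
  simp only [zsmul_eq_mul, zero_add, nsmul_eq_mul, mul_one]
  push_cast
  ring

lemma stirling2_eq_zero_of_lt {r m : ℕ} (h : r < m) : stirling2 r m = 0 := by
  have hfac := factorial_mul_stirling2 r m
  rw [fwdDiff_iter_pow_eq_zero_of_lt h, Pi.zero_apply] at hfac
  exact (mul_eq_zero.1 hfac).resolve_left (by positivity)

lemma Nat.sum_range_choose_eq_choose_add_one (N m : ℕ) :
    ∑ k ∈ range (N + 1), k.choose m = (N + 1).choose (m + 1) := by
  rw [← Nat.sum_Icc_choose]
  refine (sum_subset (fun k hk ↦ ?_) fun k hk hk' ↦ ?_).symm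
  · simp only [mem_Icc, mem_range] at hk ⊢
    omega
  · simp only [mem_Icc, mem_range, not_and, not_le] at hk hk'
    exact Nat.choose_eq_zero_of_lt (by omega)

lemma natCast_pow_eq_sum_choose_mul_stirling2 {k M : ℕ} (r : ℕ) (hk : k ≤ M) :
    (k : ℝ) ^ r =
      ∑ m ∈ range (M + 1), (k.choose m : ℝ) * ((m.factorial : ℝ) * stirling2 r m) := by
  have newton := shift_eq_sum_fwdDiff_iter (1 : ℝ) (fun x : ℝ ↦ x ^ r) k 0
  simp only [zero_add, nsmul_eq_mul, mul_one] at newton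
  rw [newton]
  refine sum_subset (range_subset_range.2 (Nat.succ_le_succ hk)) (fun m _ hm ↦ ?_) |>.trans ?_
  · rw [mem_range, not_lt] at hm
    rw [Nat.choose_eq_zero_of_lt (by omega), Nat.cast_zero, zero_mul]
  · simp only [factorial_mul_stirling2]

lemma sum_range_natCast_pow {N M : ℕ} (r : ℕ) (hN : N ≤ M) :
    ∑ k ∈ range (N + 1), (k : ℝ) ^ r =
      ∑ m ∈ range (M + 1), ((N + 1).choose (m + 1) : ℝ) * ((m.factorial : ℝ) * stirling2 r m) := by
  rw [sum_congr rfl fun k hk ↦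
      natCast_pow_eq_sum_choose_mul_stirling2 r ((Nat.lt_succ_iff.1 (mem_range.1 hk)).trans hN),
    sum_comm]
  refine sum_congr rfl fun m _ ↦ ?_
  rw [← sum_mul, ← Nat.sum_range_choose_eq_choose_add_one, Nat.cast_sum]

lemma sum_range_mul_stirling2_eq_sum_Icc (n m : ℕ) (f : ℕ → ℝ) :
    ∑ r ∈ range (n + 1), f r * stirling2 r m = ∑ r ∈ Icc m n, f r * stirling2 r m := by
  refine (sum_subset (fun r hr ↦ ?_) fun r hr hr' ↦ ?_).symm
  · simp only [mem_Icc, mem_range] at hr ⊢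
    omega
  · simp only [mem_Icc, mem_range, not_and, not_le] at hr hr'
    rw [stirling2_eq_zero_of_lt (by omega), mul_zero]

lemma sum_range_bellPoly_natCast_mul (n N : ℕ) (lam : ℝ) :
    ∑ k ∈ range (N + 1), bellPoly n (k * lam) =
      ∑ r ∈ range (n + 1), stirling2 n r * lam ^ r * ∑ k ∈ range (N + 1), (k : ℝ) ^ r := by
  simp only [bellPoly, mul_pow, mul_sum]
  rw [sum_comm]
  exact sum_congr rfl fun r _ ↦ sum_congr rfl fun k _ ↦ by ring

theorem sum_bellPoly_general (n N : ℕ) (lam : ℝ) :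
    ∑ k ∈ range (N + 1), bellPoly n (k * lam) =
      ∑ m ∈ range (n + 1), ((N + 1).choose (m + 1) : ℝ) * (m.factorial : ℝ) *
        ∑ r ∈ Icc m n, stirling2 n r * stirling2 r m * lam ^ r := by
  have vanish_of_gt : ∀ m ∈ range (N + n + 1), m ∉ range (n + 1) →
      ((N + 1).choose (m + 1) : ℝ) * (m.factorial : ℝ) *
        ∑ r ∈ Icc m n, stirling2 n r * stirling2 r m * lam ^ r = 0 := by
    intro m _ hm
    rw [mem_range, not_lt] at hm
    rw [Icc_eq_empty_of_lt (by omega), sum_empty, mul_zero]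
  -- `m` first runs up to `N + n`, which suits both the power sums (`≥ N`) and the claim (`≥ n`).
  calc ∑ k ∈ range (N + 1), bellPoly n (k * lam)
      = ∑ r ∈ range (n + 1), ∑ m ∈ range (N + n + 1), ((N + 1).choose (m + 1) : ℝ) *
          (m.factorial : ℝ) * (stirling2 n r * lam ^ r * stirling2 r m) := by
        rw [sum_range_bellPoly_natCast_mul]
        refine sum_congr rfl fun r _ ↦ ?_
        rw [sum_range_natCast_pow r (Nat.le_add_right N n), mul_sum]
        exact sum_congr rfl fun m _ ↦ by ring
    _ = ∑ m ∈ range (N + n + 1), ((N + 1).choose (m + 1) : ℝ) * (m.factorial : ℝ) *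
          ∑ r ∈ Icc m n, stirling2 n r * stirling2 r m * lam ^ r := by
        rw [sum_comm]
        refine sum_congr rfl fun m _ ↦ ?_
        rw [← mul_sum, sum_range_mul_stirling2_eq_sum_Icc]
        exact congrArg _ (sum_congr rfl fun r _ ↦ by ring)
    _ = _ := (sum_subset (range_subset_range.2 (by omega)) vanish_of_gt).symm

/-- For any real `λ` and `N ≥ n`,
`∑_{k=0}^{N} B_n(kλ) = ∑_{m=0}^{n} C(N+1, m+1) m! T(n,m)`, where
`T(n,m) = ∑_{r=m}^{n} S(n,r) S(r,m) λ^r`. -/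
theorem sum_bellPoly (n N : ℕ) (h : n ≤ N) (lam : ℝ) :
    ∑ k ∈ range (N + 1), bellPoly n (k * lam) =
      ∑ m ∈ range (n + 1), ((N + 1).choose (m + 1) : ℝ) * (m.factorial : ℝ) *
        ∑ r ∈ Icc m n, stirling2 n r * stirling2 r m * lam ^ r :=
  sum_bellPoly_general n N lam
end

section
/- Dobiński-type identity: for λ ≥ 0, ∑_{j=0}^{∞} j^n (λ^j / j!) e^{-λ} = ∑_{j=0}^{n} S(n,j) λ^j, i.e., the n-th moment of a Poisson random variable with mean λ equals the Bell polynomial B_n(λ). -/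
open Finset fwdDiff

lemma fwdDiff_pow_eq (n : ℕ) :
    Δ_[1] (fun x : ℕ => (x : ℝ) ^ n) =
      fun x : ℕ => ∑ i ∈ range n, (n.choose i : ℝ) * (x : ℝ) ^ i := by
  ext x
  simp only [fwdDiff]
  push_cast
  rw [add_pow]
  rw [Finset.sum_range_succ]
  simp [mul_comm]

lemma fwdDiff_iter_pow_eq_zero : ∀ n m : ℕ, n < m →
    (Δ_[1])^[m] (fun x : ℕ => (x : ℝ) ^ n) = 0 := by
  intro n
  induction n using Nat.strong_induction_on with
  | _ n IH =>
    intro m hm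
    obtain ⟨m', rfl⟩ : ∃ m', m = m' + 1 := ⟨m - 1, by omega⟩
    rw [Function.iterate_succ_apply, fwdDiff_pow_eq]
    have : (fun x : ℕ => ∑ i ∈ range n, (n.choose i : ℝ) * (x : ℝ) ^ i)
        = ∑ i ∈ range n, (n.choose i : ℝ) • (fun y : ℕ => (y : ℝ) ^ i) := by
      ext x
      simp [Finset.sum_apply, smul_eq_mul]
    rw [this, fwdDiff_iter_finset_sum]
    apply Finset.sum_eq_zero
    intro i hi
    have hi' := Finset.mem_range.mp hi
    rw [fwdDiff_iter_const_smul, IH i hi' m' (by omega)]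
    simp

lemma fwdDiff_iter_pow_zero (n m : ℕ) :
    (Δ_[1])^[m] (fun x : ℕ => (x : ℝ) ^ n) 0 =
      ∑ k ∈ range (m + 1), (m.choose k : ℝ) * (-1) ^ (m - k) * (k : ℝ) ^ n := by
  rw [fwdDiff_iter_eq_sum_shift]
  apply Finset.sum_congr rfl
  intro k _
  have : (0 : ℕ) + k • 1 = k := by simp
  rw [this, zsmul_eq_mul]
  push_cast
  ring

lemma pow_eq_sum_choose (n j : ℕ) :
    (j : ℝ) ^ n = ∑ m ∈ range (n + 1),
      (j.choose m : ℝ) * ((Δ_[1])^[m] (fun x : ℕ => (x : ℝ) ^ n) 0) := by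
  set c : ℕ → ℝ := fun m => (Δ_[1])^[m] (fun x : ℕ => (x : ℝ) ^ n) 0 with hc
  have h := shift_eq_sum_fwdDiff_iter (1 : ℕ) (fun x : ℕ => (x : ℝ) ^ n) j 0
  simp only [zero_add, smul_eq_mul, mul_one, nsmul_eq_mul] at h
  have hvan : ∀ m, n < m → c m = 0 := by
    intro m hm
    rw [hc]
    simp only
    rw [fwdDiff_iter_pow_eq_zero n m hm]
    rfl
  have e1 : ∑ m ∈ range (j + 1), (j.choose m : ℝ) * c m
      = ∑ m ∈ range (max j n + 1), (j.choose m : ℝ) * c m := by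
    apply Finset.sum_subset
    · exact Finset.range_subset_range.mpr (by omega)
    · intro m _ hm
      have : j < m := by
        have := Finset.mem_range.not.mp hm
        omega
      rw [Nat.choose_eq_zero_of_lt this]
      simp
  have e2 : ∑ m ∈ range (n + 1), (j.choose m : ℝ) * c m
      = ∑ m ∈ range (max j n + 1), (j.choose m : ℝ) * c m := by
    apply Finset.sum_subset
    · exact Finset.range_subset_range.mpr (by omega)
    · intro m _ hm
      have : n < m := by
        have := Finset.mem_range.not.mp hm
        omega
      rw [hvan m this]
      simp
  rw [h, e1, ← e2]

lemma summable_choose_mul (m : ℕ) (lam : ℝ) :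
    Summable (fun j : ℕ => (j.choose m : ℝ) * lam ^ j / j.factorial) ∧
    ∑' j : ℕ, (j.choose m : ℝ) * lam ^ j / j.factorial
      = lam ^ m / m.factorial * Real.exp lam := by
  set g : ℕ → ℝ := fun j => (j.choose m : ℝ) * lam ^ j / j.factorial with hg
  have hinj : Function.Injective (fun i : ℕ => i + m) := fun a b hab => by
    simpa using hab
  have hsupp : Function.support g ⊆ Set.range (fun i : ℕ => i + m) := by
    intro j hj
    rcases le_or_gt m j with h | h
    · exact ⟨j - m, by simp; omega⟩
    · exfalso
      apply hj
      simp [hg, Nat.choose_eq_zero_of_lt h]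
  have hcomp : ∀ i, g (i + m) = lam ^ m / m.factorial * (lam ^ i / i.factorial) := by
    intro i
    have h1 : ((i + m).choose m : ℝ) * i.factorial * m.factorial = (i + m).factorial := by
      exact_mod_cast congrArg (Nat.cast : ℕ → ℝ)
        (Nat.add_choose_mul_factorial_mul_factorial i m)
    have hif : (i.factorial : ℝ) ≠ 0 := Nat.cast_ne_zero.mpr i.factorial_ne_zero
    have hmf : (m.factorial : ℝ) ≠ 0 := Nat.cast_ne_zero.mpr m.factorial_ne_zero
    have himf : ((i + m).factorial : ℝ) ≠ 0 := Nat.cast_ne_zero.mpr (i + m).factorial_ne_zero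
    rw [hg]
    simp only
    rw [pow_add]
    field_simp
    rw [← h1]
    ring
  have hs' : Summable (fun i : ℕ => g (i + m)) := by
    simp_rw [hcomp]
    exact (Real.summable_pow_div_factorial lam).mul_left _
  have hs : Summable g := (hinj.summable_iff (by
    intro x hx
    by_contra h0
    exact hx (hsupp h0))).mp hs'
  refine ⟨hs, ?_⟩
  have := hinj.tsum_eq (f := g) hsupp
  rw [← this]
  calc ∑' i : ℕ, g (i + m) = ∑' i : ℕ, lam ^ m / m.factorial * (lam ^ i / i.factorial) :=
        tsum_congr hcomp
    _ = lam ^ m / m.factorial * ∑' i : ℕ, lam ^ i / i.factorial := by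
        rw [tsum_mul_left]
    _ = lam ^ m / m.factorial * Real.exp lam := by
        rw [Real.exp_eq_exp_ℝ, NormedSpace.exp_eq_tsum_div]

/-- Dobiński-type identity: for `λ ≥ 0`,
`∑_{j=0}^{∞} j^n (λ^j / j!) e^{-λ} = ∑_{j=0}^{n} S(n,j) λ^j`, i.e. the `n`-th moment of a
Poisson random variable with mean `λ` equals the Bell polynomial `B_n(λ)`. -/
theorem poisson_moment_eq_bellPoly (n : ℕ) (lam : ℝ) (hlam : 0 ≤ lam) :
    ∑' j : ℕ, (j : ℝ) ^ n * (lam ^ j / j.factorial) * Real.exp (-lam) =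
      ∑ j ∈ range (n + 1), stirling2 n j * lam ^ j := by
  set c : ℕ → ℝ := fun m => (Δ_[1])^[m] (fun x : ℕ => (x : ℝ) ^ n) 0 with hc
  have hterm : ∀ j : ℕ, (j : ℝ) ^ n * (lam ^ j / j.factorial) * Real.exp (-lam)
      = ∑ m ∈ range (n + 1),
          (c m * Real.exp (-lam)) * ((j.choose m : ℝ) * lam ^ j / j.factorial) := by
    intro j
    rw [pow_eq_sum_choose n j, Finset.sum_mul, Finset.sum_mul]
    apply Finset.sum_congr rfl
    intro m _
    ring
  rw [tsum_congr hterm, Summable.tsum_finsetSum (fun m _ => ((summable_choose_mul m lam).1.mul_left _))]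
  apply Finset.sum_congr rfl
  intro m _
  rw [tsum_mul_left, (summable_choose_mul m lam).2]
  have hexp : Real.exp (-lam) * Real.exp lam = 1 := by
    rw [← Real.exp_add]
    simp
  have hcval : c m = ∑ k ∈ range (m + 1), (m.choose k : ℝ) * (-1) ^ (m - k) * (k : ℝ) ^ n :=
    fwdDiff_iter_pow_zero n m
  rw [stirling2, ← hcval]
  calc c m * Real.exp (-lam) * (lam ^ m / m.factorial * Real.exp lam)
      = c m * lam ^ m / m.factorial * (Real.exp (-lam) * Real.exp lam) := by ring
    _ = c m * lam ^ m / m.factorial := by rw [hexp]; ring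
    _ = (m.factorial : ℝ)⁻¹ * c m * lam ^ m := by ring
end
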